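/- Let A ∈ ℂ^{n×n×n3} and suppose A = U *_c [[S_r *_c K, S_r *_c L],[O, O]] *_c U^H, where U ∈ ℂ^{n×n×n3} is unitary, S_r ∈ ℂ^{r×r×n3} is invertible, K ∈ ℂ^{r×r×n3}, L ∈ ℂ^{r×(n−r)×n3}, and K *_c K^H + L *_c L^H = I_r (the identity tensor in ℂ^{r×r×n3}) — a C-HS decomposition of A. Then the Drazin inverse of A is A^D = U *_c [[(S_r *_c K)^D, ((S_r *_c K)^D)^2 *_c S_r *_c L],[O, O]] *_c U^H. -/

import Mathlib

/-!
`mat` is injective and multiplicative, so the theorem is a statement about matrices. Placing the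
slices on `ℤ/2n3` as an even function, `mat A` is the Toeplitz-plus-Hankel matrix of that
function, and the product of two such matrices is the Toeplitz-plus-Hankel matrix of the
convolution; this is why `mat A * mat B` lies in the range of `mat`.

For matrices, conjugation by the unitary `mat U` and relabelling of indices are monoid maps, so it
suffices that `[[D, D²C], [0, 0]]` satisfies the Drazin equations for `[[B, C], [0, 0]]` with
exponent `ind B + 1`, which is block arithmetic. The exponent of a Drazin inverse can then be
lowered to any `k` with `rank (M^k) = rank (M^(k+1))`, because `M^k` factors through every higher
power of `M`.
-/

noncomputable section

/-- A third-order tensor: a family of frontal slices. -/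
abbrev Tensor (n1 n2 n3 : ℕ) : Type := Fin n3 → Matrix (Fin n1) (Fin n2) ℂ

namespace Tensor

/-- The block Toeplitz-plus-Hankel matrix `mat(A)` associated to a tensor. -/
def matT {n1 n2 n3 : ℕ} (A : Tensor n1 n2 n3) :
    Matrix (Fin n3 × Fin n1) (Fin n3 × Fin n2) ℂ := fun p q =>
  A ⟨p.1.1 - q.1.1 + (q.1.1 - p.1.1), by
        have h1 := p.1.isLt; have h2 := q.1.isLt; omega⟩ p.2 q.2 +
    (if h : p.1.1 + q.1.1 + 2 ≤ n3 then A ⟨p.1.1 + q.1.1 + 1, by omega⟩ p.2 q.2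
     else if h2 : n3 ≤ p.1.1 + q.1.1 then
       A ⟨2 * n3 - (p.1.1 + q.1.1) - 1, by have h1 := p.1.isLt; omega⟩ p.2 q.2
     else 0)

/-- `ten`, the inverse of `mat` on its range: the slices of a tensor are recovered
from the first block-column of its `mat` by an alternating sum. -/
def tenT {n1 n2 n3 : ℕ} (M : Matrix (Fin n3 × Fin n1) (Fin n3 × Fin n2) ℂ) :
    Tensor n1 n2 n3 := fun i => Matrix.of fun a b =>
  ∑ t : Fin n3, if i.1 ≤ t.1 then (-1 : ℂ) ^ (t.1 - i.1) * M (t, a) (⟨0, i.pos⟩, b) else 0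

/-- The C-product of two tensors: the unique tensor whose `mat` is `mat(A) * mat(B)`. -/
def cmul {n1 n2 l n3 : ℕ} (A : Tensor n1 n2 n3) (B : Tensor n2 l n3) : Tensor n1 l n3 :=
  tenT (matT A * matT B)

/-- The conjugate transpose of a tensor, taken slice-wise. -/
def conjT {n1 n2 n3 : ℕ} (A : Tensor n1 n2 n3) : Tensor n2 n1 n3 := fun i => (A i).conjTranspose

/-- The identity tensor: the tensor whose `mat` is the identity matrix. -/
def idT {n n3 : ℕ} : Tensor n n n3 := fun i => if i.1 = 0 then 1 else 0

/-- A tensor is unitary if `Qᴴ *c Q = Q *c Qᴴ = I`. -/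
def Unitary {n n3 : ℕ} (Q : Tensor n n n3) : Prop :=
  cmul (conjT Q) Q = idT ∧ cmul Q (conjT Q) = idT

/-- `X` is the inverse of the square tensor `B` under the C-product. -/
def IsInverse {n n3 : ℕ} (B X : Tensor n n n3) : Prop :=
  cmul B X = idT ∧ cmul X B = idT

/-- `X` is the Moore-Penrose inverse of `A` under the C-product. -/
def IsMP {n1 n2 n3 : ℕ} (A : Tensor n1 n2 n3) (X : Tensor n2 n1 n3) : Prop :=
  cmul (cmul A X) A = A ∧ cmul (cmul X A) X = X ∧
    conjT (cmul A X) = cmul A X ∧ conjT (cmul X A) = cmul X A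

/-- Powers of a square tensor with respect to the C-product. -/
def cpow {n n3 : ℕ} (A : Tensor n n n3) : ℕ → Tensor n n n3
  | 0 => idT
  | m + 1 => cmul (cpow A m) A

/-- `ind(A) = k`: `k` is the smallest nonnegative integer with
`rank(mat(A)^k) = rank(mat(A)^(k+1))`. -/
def IsIndex {n n3 : ℕ} (A : Tensor n n n3) (k : ℕ) : Prop :=
  (matT A ^ k).rank = (matT A ^ (k + 1)).rank ∧
    ∀ j < k, (matT A ^ j).rank ≠ (matT A ^ (j + 1)).rank

/-- `X` is the Drazin inverse of `A` (of index `k`) under the C-product. -/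
def IsDrazin {n n3 : ℕ} (A : Tensor n n n3) (k : ℕ) (X : Tensor n n n3) : Prop :=
  cmul (cpow A (k + 1)) X = cpow A k ∧ cmul (cmul X A) X = X ∧ cmul A X = cmul X A

/-- `X` is an inverse of `A` along `G` under the C-product. -/
def IsInvAlong {n1 n2 n3 : ℕ} (A : Tensor n1 n2 n3) (G X : Tensor n2 n1 n3) : Prop :=
  cmul (cmul X A) G = G ∧ cmul (cmul G A) X = G ∧
    (∃ U : Tensor n1 n1 n3, X = cmul G U) ∧
    (∃ V : Tensor n2 n2 n3, conjT X = cmul (conjT G) V)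

/-- All frontal slices are diagonal. -/
def FDiag {n1 n2 n3 : ℕ} (A : Tensor n1 n2 n3) : Prop :=
  ∀ (i : Fin n3) (a : Fin n1) (b : Fin n2), (a : ℕ) ≠ (b : ℕ) → A i a b = 0

/-- All frontal slices are upper triangular. -/
def FUpper {n1 n2 n3 : ℕ} (A : Tensor n1 n2 n3) : Prop :=
  ∀ (i : Fin n3) (a : Fin n1) (b : Fin n2), (b : ℕ) < (a : ℕ) → A i a b = 0

/-- All frontal slices are lower triangular. -/
def FLower {n1 n2 n3 : ℕ} (A : Tensor n1 n2 n3) : Prop :=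
  ∀ (i : Fin n3) (a : Fin n1) (b : Fin n2), (a : ℕ) < (b : ℕ) → A i a b = 0

/-- Slice-wise 2×2 block tensor `[[A, B],[C, D]]`. -/
def blockT {r s t u n3 : ℕ} (A : Tensor r t n3) (B : Tensor r u n3)
    (C : Tensor s t n3) (D : Tensor s u n3) : Tensor (r + s) (t + u) n3 := fun i =>
  Matrix.reindex finSumFinEquiv finSumFinEquiv (Matrix.fromBlocks (A i) (B i) (C i) (D i))

/-- The mode-3 product of a tensor with an `n3 × n3` matrix. -/
def mode3 {n1 n2 n3 : ℕ} (A : Tensor n1 n2 n3) (M : Matrix (Fin n3) (Fin n3) ℂ) :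
    Tensor n1 n2 n3 := fun l => ∑ i, M l i • A i

end Tensor

def IsDrazinInverse {M : Type*} [Monoid M] (a : M) (k : ℕ) (x : M) : Prop :=
  a ^ (k + 1) * x = a ^ k ∧ x * a * x = x ∧ a * x = x * a

namespace IsDrazinInverse

variable {M N : Type*} [Monoid M] [Monoid N] {a x : M} {k : ℕ}

theorem map {F : Type*} [FunLike F M N] [MonoidHomClass F M N] (f : F)
    (h : IsDrazinInverse a k x) : IsDrazinInverse (f a) k (f x) := by
  obtain ⟨h₁, h₂, h₃⟩ := h
  refine ⟨?_, ?_, ?_⟩ <;> simp only [← map_pow, ← map_mul, h₁, h₂, h₃]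

theorem pow_add_succ_mul (h : IsDrazinInverse a k x) (m : ℕ) :
    a ^ (m + k + 1) * x = a ^ (m + k) := by
  rw [add_assoc, pow_add, mul_assoc, h.1, ← pow_add]

theorem of_pow_add_mul_eq (h : IsDrazinInverse a k x) {j : ℕ} {w : M}
    (hw : a ^ (j + k) * w = a ^ j) : IsDrazinInverse a j x := by
  refine ⟨?_, h.2.1, h.2.2⟩
  have hc : Commute (a ^ (j + k + 1)) x := Commute.pow_left h.2.2 _
  calc a ^ (j + 1) * x = x * a ^ (j + 1) := (Commute.pow_left h.2.2 _).eq
    _ = x * (a ^ (j + k + 1) * w) := by rw [pow_succ', ← hw, ← mul_assoc a, ← pow_succ']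
    _ = a ^ (j + k + 1) * x * w := by rw [← mul_assoc, hc.eq]
    _ = a ^ j := by rw [h.pow_add_succ_mul, hw]

end IsDrazinInverse

namespace Matrix

variable {ι α β K : Type*} [Fintype ι] [DecidableEq ι] [Field K]

theorem exists_mul_eq_of_range_le {A B : Matrix ι ι K}
    (h : LinearMap.range B.mulVecLin ≤ LinearMap.range A.mulVecLin) : ∃ W, A * W = B := by
  choose w hw using fun j => h (LinearMap.mem_range_self B.mulVecLin (Pi.single j 1))
  simp only [mulVecLin_apply, mulVec_single_one] at hw
  refine ⟨(of w)ᵀ, ?_⟩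
  ext i j
  simpa [mulVec, dotProduct, mul_apply] using congrFun (hw j) i

theorem range_mulVecLin_pow_succ_eq {A : Matrix ι ι K} {k : ℕ}
    (h : (A ^ k).rank = (A ^ (k + 1)).rank) :
    LinearMap.range (A ^ (k + 1)).mulVecLin = LinearMap.range (A ^ k).mulVecLin := by
  refine Submodule.eq_of_le_of_finrank_eq ?_ h.symm
  rw [pow_succ, Matrix.mulVecLin_mul]
  exact LinearMap.range_comp_le_range _ _

theorem range_mulVecLin_pow_add_eq {A : Matrix ι ι K} {k : ℕ}
    (h : (A ^ k).rank = (A ^ (k + 1)).rank) (m : ℕ) :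
    LinearMap.range (A ^ (k + m)).mulVecLin = LinearMap.range (A ^ k).mulVecLin := by
  induction m with
  | zero => rfl
  | succ m ih =>
    rw [← add_assoc, pow_succ', Matrix.mulVecLin_mul, LinearMap.range_comp, ih,
      ← LinearMap.range_comp, ← Matrix.mulVecLin_mul, ← pow_succ',
      range_mulVecLin_pow_succ_eq h]

variable [Fintype α] [DecidableEq α] [Fintype β] [DecidableEq β] {R : Type*} [Semiring R]

theorem fromBlocks_zero_zero_pow_succ (B : Matrix α α R) (C : Matrix α β R) (m : ℕ) :
    fromBlocks B C (0 : Matrix β α R) 0 ^ (m + 1) = fromBlocks (B ^ (m + 1)) (B ^ m * C) 0 0 := by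
  induction m with
  | zero => simp
  | succ m ih =>
    rw [pow_succ, ih, fromBlocks_multiply]
    simp [pow_succ, Matrix.mul_assoc]

theorem isDrazinInverse_fromBlocks_zero_zero {B D : Matrix α α R} {k : ℕ}
    (h : IsDrazinInverse B k D) (C : Matrix α β R) :
    IsDrazinInverse (fromBlocks B C (0 : Matrix β α R) 0) (k + 1)
      (fromBlocks D (D * D * C) 0 0) := by
  obtain ⟨h₁, h₂, h₃⟩ := h
  have h₁' : B ^ (k + 2) * D = B ^ (k + 1) := by
    rw [pow_succ', Matrix.mul_assoc, h₁, ← pow_succ']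
  refine ⟨?_, ?_, ?_⟩
  · rw [fromBlocks_zero_zero_pow_succ, fromBlocks_zero_zero_pow_succ, fromBlocks_multiply]
    simp only [Matrix.mul_zero, Matrix.zero_mul, add_zero, ← Matrix.mul_assoc, h₁', h₁]
  · simp only [fromBlocks_multiply, Matrix.mul_zero, Matrix.zero_mul, add_zero,
      ← Matrix.mul_assoc, h₂]
  · simp only [fromBlocks_multiply, Matrix.mul_zero, Matrix.zero_mul, add_zero,
      ← Matrix.mul_assoc, h₃, h₂]

end Matrix

theorem IsDrazinInverse.of_rank_pow_eq {ι K : Type*} [Fintype ι] [DecidableEq ι] [Field K]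
    {A X : Matrix ι ι K} {k j : ℕ}
    (h : IsDrazinInverse A k X) (hj : (A ^ j).rank = (A ^ (j + 1)).rank) :
    IsDrazinInverse A j X := by
  obtain ⟨W, hW⟩ := Matrix.exists_mul_eq_of_range_le (Matrix.range_mulVecLin_pow_add_eq hj k).ge
  exact h.of_pow_add_mul_eq hW

theorem ZMod.natCast_eq_neg_of_add_eq {n a b : ℕ} (h : a + b = n) :
    (a : ZMod n) = -(b : ZMod n) := by
  rw [eq_neg_iff_add_eq_zero, ← Nat.cast_add, h, ZMod.natCast_self]

namespace Tensor

variable {n1 n2 l n3 : ℕ}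

/-- The sign `(-1)^x`, well defined on `ℤ/2n3` because `2n3` is even. -/
def altSign (x : ZMod (2 * n3)) : ℂ := (-1) ^ (ZMod.castHom (dvd_mul_right 2 n3) (ZMod 2) x).val

theorem altSign_neg (x : ZMod (2 * n3)) : altSign (-x) = altSign x := by
  rw [altSign, map_neg, ZMod.neg_eq_self_mod_two, altSign]

theorem altSign_mul_self (x : ZMod (2 * n3)) : altSign x * altSign x = 1 := by
  rw [altSign, ← mul_pow, neg_one_mul, neg_neg, one_pow]

theorem altSign_add_one_add_two_mul (x y : ZMod (2 * n3)) :
    altSign (x + 1 + 2 * y) = -altSign x := by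
  have h2 : (2 : ZMod 2) = 0 := rfl
  simp only [altSign, map_add, map_one, map_mul, map_ofNat, h2, zero_mul, add_zero]
  generalize ZMod.castHom (dvd_mul_right 2 n3) (ZMod 2) x = c
  fin_cases c
  · show (-1 : ℂ) ^ 1 = -(-1) ^ 0; norm_num
  · show (-1 : ℂ) ^ 0 = -(-1) ^ 1; norm_num

def toeplitzHankel (f : ZMod (2 * n3) → Matrix (Fin n1) (Fin n2) ℂ) :
    Matrix (Fin n3 × Fin n1) (Fin n3 × Fin n2) ℂ := fun p q =>
  (f ((q.1 : ℕ) - (p.1 : ℕ)) + f (-1 - (p.1 : ℕ) - (q.1 : ℕ))) p.2 q.2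

theorem toeplitzHankel_sub_altSign_smul (h : ZMod (2 * n3) → Matrix (Fin n1) (Fin n2) ℂ)
    (c : Matrix (Fin n1) (Fin n2) ℂ) :
    toeplitzHankel (fun y => h y - altSign y • c) = toeplitzHankel h := by
  ext ⟨i, a⟩ ⟨j, b⟩
  have hsign : altSign ((j : ℕ) - (i : ℕ) : ZMod (2 * n3)) +
      altSign (-1 - (i : ℕ) - (j : ℕ) : ZMod (2 * n3)) = 0 := by
    have hshift : ((j : ℕ) - (i : ℕ) : ZMod (2 * n3)) =
        -1 - (i : ℕ) - (j : ℕ) + 1 + 2 * (j : ℕ) := by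
      ring
    rw [hshift, altSign_add_one_add_two_mul, neg_add_cancel]
  simp only [toeplitzHankel, Matrix.add_apply, Matrix.sub_apply, Matrix.smul_apply, smul_eq_mul]
  linear_combination (-c a b) * hsign

section EvenExtension

variable [NeZero n3]

/-- The slices of `A` as an even function on `ℤ/2n3`: slice `t` (counted from `0`) sits at `±t`,
and the class of `n3`, the only one left over, carries `0`. -/
def evenExt (A : Tensor n1 n2 n3) (x : ZMod (2 * n3)) : Matrix (Fin n1) (Fin n2) ℂ :=
  if h : min x.val (2 * n3 - x.val) < n3 then A ⟨_, h⟩ else 0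

theorem evenExt_neg (A : Tensor n1 n2 n3) (x : ZMod (2 * n3)) :
    evenExt A (-x) = evenExt A x := by
  rcases eq_or_ne x 0 with rfl | hx
  · rw [neg_zero]
  · have hlt := ZMod.val_lt x
    have hmin :
        min (2 * n3 - x.val) (2 * n3 - (2 * n3 - x.val)) = min x.val (2 * n3 - x.val) := by
      omega
    simp only [evenExt, ZMod.neg_val, if_neg hx, hmin]

theorem evenExt_natCast_of_le (A : Tensor n1 n2 n3) {t : ℕ} (ht : t ≤ n3) :
    evenExt A t = if h : t < n3 then A ⟨t, h⟩ else 0 := by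
  have hval : (t : ZMod (2 * n3)).val = t :=
    ZMod.val_cast_of_lt (by have := NeZero.pos n3; omega)
  have hmin : min t (2 * n3 - t) = t := by omega
  simp only [evenExt, hval, hmin]

theorem matT_eq_toeplitzHankel (A : Tensor n1 n2 n3) : matT A = toeplitzHankel (evenExt A) := by
  ext ⟨i, a⟩ ⟨j, b⟩
  have hi := i.isLt
  have hj := j.isLt
  have htoeplitz : evenExt A ((j : ℕ) - (i : ℕ)) = A ⟨i - j + (j - i), by omega⟩ := by
    rcases le_total (i : ℕ) j with hij | hij
    · rw [← Nat.cast_sub hij, evenExt_natCast_of_le A (by omega), dif_pos (by omega)]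
      exact congrArg A (Fin.ext (by dsimp only; omega))
    · rw [← neg_sub, ← Nat.cast_sub hij, evenExt_neg, evenExt_natCast_of_le A (by omega),
        dif_pos (by omega)]
      exact congrArg A (Fin.ext (by dsimp only; omega))
  simp only [matT, toeplitzHankel, Matrix.add_apply, htoeplitz]
  congr 1
  rcases le_or_gt ((i : ℕ) + j + 1) n3 with hs | hs
  · rw [show (-1 - (i : ℕ) - (j : ℕ) : ZMod (2 * n3)) = -((i + j + 1 : ℕ) : ZMod (2 * n3)) by
        push_cast; ring, evenExt_neg, evenExt_natCast_of_le A hs]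
    split_ifs <;> first | omega | rfl
  · have hcast :
        (-1 - (i : ℕ) - (j : ℕ) : ZMod (2 * n3)) = ((2 * n3 - (i + j + 1) : ℕ) : _) := by
      rw [ZMod.natCast_eq_neg_of_add_eq (a := 2 * n3 - (i + j + 1)) (b := i + j + 1) (by omega)]
      push_cast
      ring
    rw [hcast, evenExt_natCast_of_le A (by omega)]
    split_ifs <;> first | omega | rfl

theorem sum_zmod_two_mul_eq_sum_fin {M : Type*} [AddCommMonoid M] (F : ZMod (2 * n3) → M) :
    ∑ x, F x = ∑ t : Fin n3, (F (t : ℕ) + F (-1 - (t : ℕ))) := by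
  have hbij : Function.Bijective fun k : Fin (2 * n3) => ((k : ℕ) : ZMod (2 * n3)) := by
    refine (Fintype.bijective_iff_injective_and_card _).mpr ⟨fun k k' h => ?_, by simp⟩
    have := congrArg ZMod.val h
    rwa [ZMod.val_cast_of_lt k.isLt, ZMod.val_cast_of_lt k'.isLt, Fin.val_inj] at this
  rw [← hbij.sum_comp, Fin.sum_univ_eq_sum_range (fun k => F k),
    show Finset.range (2 * n3) = Finset.range (n3 + n3) by rw [two_mul], Finset.sum_range_add,
    ← Finset.sum_range_reflect (fun k => F ↑(n3 + k)), ← Finset.sum_add_distrib,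
    Fin.sum_univ_eq_sum_range (fun t => F t + F (-1 - t))]
  refine Finset.sum_congr rfl fun t ht => ?_
  rw [Finset.mem_range] at ht
  rw [ZMod.natCast_eq_neg_of_add_eq (a := n3 + (n3 - 1 - t)) (b := t + 1) (by omega)]
  push_cast
  ring_nf

def blockConv (f : ZMod (2 * n3) → Matrix (Fin n1) (Fin n2) ℂ)
    (g : ZMod (2 * n3) → Matrix (Fin n2) (Fin l) ℂ) (y : ZMod (2 * n3)) :
    Matrix (Fin n1) (Fin l) ℂ :=
  ∑ x, f x * g (y - x)

theorem blockConv_neg {f : ZMod (2 * n3) → Matrix (Fin n1) (Fin n2) ℂ}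
    {g : ZMod (2 * n3) → Matrix (Fin n2) (Fin l) ℂ} (hf : ∀ x, f (-x) = f x)
    (hg : ∀ x, g (-x) = g x) (y : ZMod (2 * n3)) : blockConv f g (-y) = blockConv f g y := by
  refine Fintype.sum_equiv (Equiv.neg _) _ _ fun x => ?_
  rw [Equiv.neg_apply, hf, ← hg]
  congr 2
  abel

theorem toeplitzHankel_mul {f : ZMod (2 * n3) → Matrix (Fin n1) (Fin n2) ℂ}
    {g : ZMod (2 * n3) → Matrix (Fin n2) (Fin l) ℂ} (hg : ∀ x, g (-x) = g x) :
    toeplitzHankel f * toeplitzHankel g = toeplitzHankel (blockConv f g) := by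
  ext ⟨i, a⟩ ⟨j, b⟩
  simp only [Matrix.mul_apply, Fintype.sum_prod_type, toeplitzHankel]
  simp only [← Matrix.mul_apply, ← Matrix.sum_apply]
  refine congrFun (congrFun ?_ a) b
  set F : ZMod (2 * n3) → Matrix (Fin n1) (Fin l) ℂ := fun x =>
    f (x - (i : ℕ)) * (g ((j : ℕ) - x) + g (-1 - x - (j : ℕ)))
  have hreflect (c : Fin n3) : F (-1 - (c : ℕ)) = f (-1 - (i : ℕ) - (c : ℕ)) *
      (g (-1 - (c : ℕ) - (j : ℕ)) + g ((j : ℕ) - (c : ℕ))) := by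
    have e1 : (-1 - (c : ℕ) - (i : ℕ) : ZMod (2 * n3)) = -1 - (i : ℕ) - (c : ℕ) := by ring
    have e2 : -((j : ℕ) - (-1 - (c : ℕ)) : ZMod (2 * n3)) = -1 - (c : ℕ) - (j : ℕ) := by
      ring
    have e3 : -(-1 - (-1 - (c : ℕ)) - (j : ℕ) : ZMod (2 * n3)) = (j : ℕ) - (c : ℕ) := by
      ring
    simp only [F]
    rw [e1, ← e2, hg, ← e3, hg]
  calc _ = ∑ c : Fin n3, (F (c : ℕ) + F (-1 - (c : ℕ))) := by
        refine Finset.sum_congr rfl fun c _ => ?_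
        rw [hreflect, Matrix.add_mul, add_comm (g (-1 - _ - _))]
    _ = ∑ x, F (x + (i : ℕ)) := by
        rw [← sum_zmod_two_mul_eq_sum_fin]
        exact (Equiv.sum_comp (Equiv.addRight _) F).symm
    _ = _ := by
        simp only [F, blockConv, ← Finset.sum_add_distrib, add_sub_cancel_right]
        refine Finset.sum_congr rfl fun x _ => ?_
        rw [Matrix.mul_add, sub_add_eq_sub_sub_swap, sub_add_eq_sub_sub_swap,
          sub_right_comm _ _ (j : ZMod (2 * n3))]

theorem natCast_min_val_eq_or_eq_neg (y : ZMod (2 * n3)) :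
    ((min y.val (2 * n3 - y.val) : ℕ) : ZMod (2 * n3)) = y ∨
      ((min y.val (2 * n3 - y.val) : ℕ) : ZMod (2 * n3)) = -y := by
  rcases min_choice y.val (2 * n3 - y.val) with h | h <;> rw [h]
  · exact Or.inl (ZMod.natCast_zmod_val y)
  · right
    rw [ZMod.natCast_eq_neg_of_add_eq (b := y.val) (by have := ZMod.val_lt y; omega),
      ZMod.natCast_zmod_val]

theorem exists_matT_eq_toeplitzHankel {h : ZMod (2 * n3) → Matrix (Fin n1) (Fin n2) ℂ}
    (hh : ∀ x, h (-x) = h x) : ∃ C : Tensor n1 n2 n3, matT C = toeplitzHankel h := by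
  -- Subtracting a multiple of `altSign`, which `toeplitzHankel` does not see, makes `h` vanish at
  -- `n3`, as `evenExt` does.
  let c := altSign (n3 : ZMod (2 * n3)) • h n3
  let C : Tensor n1 n2 n3 := fun t => h (t : ℕ) - altSign ((t : ℕ) : ZMod (2 * n3)) • c
  have hC : evenExt C = fun y => h y - altSign y • c := by
    funext y
    unfold evenExt
    split_ifs with hy
    · rcases natCast_min_val_eq_or_eq_neg y with e | e <;> simp only [C, e, hh, altSign_neg]
    · have : y = n3 := by
        rw [← ZMod.natCast_zmod_val y]
        congr 1
        have := ZMod.val_lt y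
        omega
      rw [this, smul_smul, altSign_mul_self, one_smul, sub_self]
  exact ⟨C, by rw [matT_eq_toeplitzHankel, hC, toeplitzHankel_sub_altSign_smul]⟩

theorem exists_matT_eq_mul (A : Tensor n1 n2 n3) (B : Tensor n2 l n3) :
    ∃ C, matT C = matT A * matT B := by
  rw [matT_eq_toeplitzHankel A, matT_eq_toeplitzHankel B, toeplitzHankel_mul (evenExt_neg B)]
  exact exists_matT_eq_toeplitzHankel (blockConv_neg (evenExt_neg A) (evenExt_neg B))

end EvenExtension

theorem tenT_matT (A : Tensor n1 n2 n3) : tenT (matT A) = A := by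
  funext i
  ext a b
  let g : ℕ → ℂ := fun t => if h : t < n3 then A ⟨t, h⟩ a b else 0
  have hcol (t : Fin n3) : matT A (t, a) (⟨0, i.pos⟩, b) = g t + g (t + 1) := by
    have ht := t.isLt
    simp only [matT, g, dif_pos ht]
    split_ifs <;> first | contradiction | omega | simp
  simp only [tenT, Matrix.of_apply, hcol]
  rw [Fin.sum_univ_eq_sum_range
      (fun t => if (i : ℕ) ≤ t then (-1 : ℂ) ^ (t - i) * (g t + g (t + 1)) else 0),
    ← Finset.sum_filter,
    show (Finset.range n3).filter (fun t => (i : ℕ) ≤ t) = Finset.Ico (i : ℕ) n3 by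
      ext; simp [and_comm], Finset.sum_Ico_eq_sum_range]
  have hstep (u : ℕ) : (-1 : ℂ) ^ (i + u - i) * (g (i + u) + g (i + u + 1)) =
      (-1) ^ u * g (i + u) - (-1) ^ (u + 1) * g (i + (u + 1)) := by
    rw [Nat.add_sub_cancel_left, pow_succ, ← add_assoc]
    ring
  rw [Finset.sum_congr rfl fun u _ => hstep u, Finset.sum_range_sub', Nat.add_sub_of_le i.isLt.le]
  simp [g]

theorem matT_injective : Function.Injective (matT : Tensor n1 n2 n3 → _) :=
  Function.LeftInverse.injective tenT_matT

theorem matT_cmul (A : Tensor n1 n2 n3) (B : Tensor n2 l n3) :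
    matT (cmul A B) = matT A * matT B := by
  rcases Nat.eq_zero_or_pos n3 with rfl | hn3
  · ext ⟨i, _⟩
    exact i.elim0
  · have : NeZero n3 := ⟨hn3.ne'⟩
    obtain ⟨C, hC⟩ := exists_matT_eq_mul A B
    rw [cmul, ← hC, tenT_matT]

theorem matT_conjT (A : Tensor n1 n2 n3) : matT (conjT A) = (matT A).conjTranspose := by
  ext ⟨i, a⟩ ⟨j, b⟩
  simp only [matT, conjT, Matrix.conjTranspose_apply, star_add]
  congr 1
  · congr 3
    omega
  · split_ifs <;> first | omega | simp only [star_zero] | (congr 3; omega)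

theorem matT_idT {n : ℕ} : matT (idT : Tensor n n n3) = 1 := by
  ext ⟨i, a⟩ ⟨j, b⟩
  simp only [matT, idT]
  split_ifs <;> simp only [Matrix.one_apply, Matrix.zero_apply, Prod.mk.injEq, Fin.ext_iff] <;>
    split_ifs <;> first | contradiction | omega | simp

theorem matT_zero : matT (0 : Tensor n1 n2 n3) = 0 := by
  ext
  simp [matT]

theorem matT_cpow {n : ℕ} (A : Tensor n n n3) (m : ℕ) : matT (cpow A m) = matT A ^ m := by
  induction m with
  | zero => rw [cpow, pow_zero, matT_idT]
  | succ m ih => rw [cpow, matT_cmul, ih, pow_succ]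

theorem isDrazin_iff_matT {n : ℕ} (A X : Tensor n n n3) (k : ℕ) :
    IsDrazin A k X ↔ IsDrazinInverse (matT A) k (matT X) := by
  simp only [IsDrazin, IsDrazinInverse, ← matT_injective.eq_iff, matT_cmul, matT_cpow]

theorem Unitary.matT_mem_unitary {n : ℕ} {U : Tensor n n n3} (hU : Unitary U) :
    matT U ∈ unitary (Matrix (Fin n3 × Fin n) (Fin n3 × Fin n) ℂ) := by
  rw [Unitary.mem_iff, Matrix.star_eq_conjTranspose, ← matT_conjT, ← matT_cmul, ← matT_cmul,
    hU.1, hU.2, matT_idT]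
  exact ⟨rfl, rfl⟩

def blockIndexEquiv (n3 r s : ℕ) :
    Fin n3 × Fin (r + s) ≃ (Fin n3 × Fin r) ⊕ (Fin n3 × Fin s) :=
  (Equiv.prodCongr (Equiv.refl _) finSumFinEquiv.symm).trans (Equiv.prodSumDistrib _ _ _)

theorem matT_blockT {r s t u : ℕ} (A : Tensor r t n3) (B : Tensor r u n3) (C : Tensor s t n3)
    (D : Tensor s u n3) :
    matT (blockT A B C D) = (Matrix.fromBlocks (matT A) (matT B) (matT C) (matT D)).submatrix
      (blockIndexEquiv n3 r s) (blockIndexEquiv n3 t u) := by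
  ext ⟨i, x⟩ ⟨j, y⟩
  obtain ⟨x, rfl⟩ := finSumFinEquiv.surjective x
  obtain ⟨y, rfl⟩ := finSumFinEquiv.surjective y
  rcases x with x | x <;> rcases y with y | y <;>
    simp [matT, blockT, blockIndexEquiv, Equiv.prodSumDistrib]

end Tensor

open Tensor

theorem stmt16_general {r s n3 : ℕ} (A U : Tensor (r + s) (r + s) n3)
    (Sr K : Tensor r r n3) (L : Tensor r s n3)
    (hU : Unitary U)
    (hA : A = cmul (cmul U (blockT (cmul Sr K) (cmul Sr L) 0 0)) (conjT U))
    (kd : ℕ)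
    (Dk : Tensor r r n3) (hDk : IsDrazin (cmul Sr K) kd Dk)
    (k : ℕ) (hk : IsIndex A k) :
    IsDrazin A k
      (cmul (cmul U (blockT Dk (cmul (cmul (cmul Dk Dk) Sr) L) 0 0)) (conjT U)) := by
  rw [isDrazin_iff_matT] at hDk ⊢
  have hconj := ((Matrix.isDrazinInverse_fromBlocks_zero_zero hDk (matT (cmul Sr L))).map
    (Matrix.reindexAlgEquiv ℂ ℂ (blockIndexEquiv n3 r s).symm)).map
    (Unitary.conjStarAlgAut ℂ _ ⟨matT U, hU.matT_mem_unitary⟩)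
  refine IsDrazinInverse.of_rank_pow_eq (k := kd + 1) ?_ hk.1
  convert hconj using 1 <;>
    simp [hA, matT_cmul, matT_conjT, matT_blockT, matT_zero, Matrix.mul_assoc,
      Matrix.star_eq_conjTranspose]

theorem stmt16 {r s n3 : ℕ} (A U : Tensor (r + s) (r + s) n3)
    (Sr K : Tensor r r n3) (L : Tensor r s n3)
    (hU : Unitary U) (hSr : ∃ W, IsInverse Sr W)
    (hKL : cmul K (conjT K) + cmul L (conjT L) = idT)
    (hA : A = cmul (cmul U (blockT (cmul Sr K) (cmul Sr L) 0 0)) (conjT U))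
    (kd : ℕ) (hkd : IsIndex (cmul Sr K) kd)
    (Dk : Tensor r r n3) (hDk : IsDrazin (cmul Sr K) kd Dk)
    (k : ℕ) (hk : IsIndex A k) :
    IsDrazin A k
      (cmul (cmul U (blockT Dk (cmul (cmul (cmul Dk Dk) Sr) L) 0 0)) (conjT U)) :=
  stmt16_general A U Sr K L hU hA kd Dk hDk k hk
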